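/- With the appended-row setup below, define the Wolfe gap G = sup over z ∈ ℝᵈ with ‖z‖₁ ≤ λ of ⟨Xw − Xz, g⟩, and G' = sup over z ∈ ℝᵈ with ‖z‖₁ ≤ λ of ⟨X'w − X'z, g'⟩. Then |G' − G| ≤ 4λ²/n. -/

import Mathlib

/-!
Only the appended row changes the objective: for every feasible `z`,
`⟨X'w − X'z, g'⟩ = ⟨Xw − Xz, g⟩ + (x₀·w − x₀·z) · (x₀·w − y₀) / n`,
and Hölder's inequality bounds the extra term by `2λ · 2λ / n`. Two functions that are uniformly
`c`-close on a set have suprema over it that are `c`-close, and both suprema are finite because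
the ℓ₁ ball is compact.
-/

open Finset

lemma abs_sum_mul_le_sum_abs_of_abs_le_one {ι : Type*} [Fintype ι] {x : ι → ℝ}
    (hx : ∀ k, |x k| ≤ 1) (z : ι → ℝ) : |∑ k, x k * z k| ≤ ∑ k, |z k| :=
  (abs_sum_le_sum_abs _ _).trans <| sum_le_sum fun k _ => by
    rw [abs_mul]
    exact mul_le_of_le_one_left (abs_nonneg _) (hx k)

lemma isCompact_setOf_sum_abs_le {ι : Type*} [Fintype ι] (r : ℝ) :
    IsCompact {z : ι → ℝ | ∑ k, |z k| ≤ r} := by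
  refine Metric.isCompact_of_isClosed_isBounded
    (isClosed_le (by fun_prop) continuous_const) ?_
  refine (Metric.isBounded_closedBall (x := 0) (r := r)).subset fun z hz => ?_
  have hr : 0 ≤ r := (sum_nonneg fun k _ => abs_nonneg _).trans hz
  rw [mem_closedBall_zero_iff, pi_norm_le_iff_of_nonneg hr]
  exact fun k => (single_le_sum (fun k _ => abs_nonneg (z k)) (mem_univ k)).trans hz

lemma csSup_image_le_csSup_image_add {α : Type*} {S : Set α} (hS : S.Nonempty) {f f' : α → ℝ}
    (hf : BddAbove (f '' S)) {c : ℝ} (h : ∀ z ∈ S, f' z ≤ f z + c) :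
    sSup (f' '' S) ≤ sSup (f '' S) + c :=
  csSup_le (hS.image f') <| Set.forall_mem_image.2 fun z hz =>
    (h z hz).trans (add_le_add_left (le_csSup hf (Set.mem_image_of_mem f hz)) c)

lemma abs_csSup_image_sub_csSup_image_le {α : Type*} {S : Set α} (hS : S.Nonempty)
    {f f' : α → ℝ} (hf : BddAbove (f '' S)) (hf' : BddAbove (f' '' S)) {c : ℝ}
    (h : ∀ z ∈ S, |f' z - f z| ≤ c) : |sSup (f' '' S) - sSup (f '' S)| ≤ c := by
  rw [abs_sub_le_iff, sub_le_iff_le_add', sub_le_iff_le_add']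
  constructor
  · refine csSup_image_le_csSup_image_add hS hf fun z hz => ?_
    linarith [(abs_le.1 (h z hz)).2]
  · refine csSup_image_le_csSup_image_add hS hf' fun z hz => ?_
    linarith [(abs_le.1 (h z hz)).1]

lemma abs_sub_mul_sub_le {a b c lam : ℝ} (ha : |a| ≤ lam) (hb : |b| ≤ lam) (hc : |c| ≤ lam)
    {t : ℝ} (ht : 0 ≤ t) : |(a - b) * (t * (a - c))| ≤ 4 * lam ^ 2 * t := by
  have hab : |a - b| ≤ 2 * lam := (abs_sub a b).trans (by linarith)
  have hac : |a - c| ≤ 2 * lam := (abs_sub a c).trans (by linarith)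
  have hlam : 0 ≤ 2 * lam := (abs_nonneg _).trans hab
  rw [abs_mul, abs_mul, abs_of_nonneg ht]
  calc |a - b| * (t * |a - c|) ≤ 2 * lam * (t * (2 * lam)) := by gcongr
    _ = 4 * lam ^ 2 * t := by ring

section WolfeGap

variable {ι κ : Type*} [Fintype ι] [Fintype κ]

/-- `z ↦ ⟨Xw − Xz, g⟩`, whose supremum over the constraint set is the Wolfe gap. -/
def wolfeGapFun (X : ι → κ → ℝ) (w : κ → ℝ) (g : ι → ℝ) (z : κ → ℝ) : ℝ :=
  ∑ j, ((∑ k, X j k * w k) - ∑ k, X j k * z k) * g j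

lemma continuous_wolfeGapFun (X : ι → κ → ℝ) (w : κ → ℝ) (g : ι → ℝ) :
    Continuous (wolfeGapFun X w g) := by
  unfold wolfeGapFun
  fun_prop

lemma wolfeGapFun_snoc {n : ℕ} (X : Fin n → κ → ℝ) (x₀ w : κ → ℝ) (g : Fin n → ℝ)
    (g₀ : ℝ) (z : κ → ℝ) :
    wolfeGapFun (Fin.snoc X x₀) w (Fin.snoc g g₀) z =
      wolfeGapFun X w g z + ((∑ k, x₀ k * w k) - ∑ k, x₀ k * z k) * g₀ := by
  simp [wolfeGapFun, Fin.sum_univ_castSucc]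

end WolfeGap

theorem sensitivity_wolfe_gap_general (n d : ℕ) (lam : ℝ)
    (X : Fin n → Fin d → ℝ) (y : Fin n → ℝ)
    (x₀ : Fin d → ℝ) (hx₀ : ∀ k, |x₀ k| ≤ 1) (y₀ : ℝ) (hy₀ : |y₀| ≤ lam)
    (X' : Fin (n + 1) → Fin d → ℝ) (hX' : X' = Fin.snoc X x₀)
    (y' : Fin (n + 1) → ℝ) (hy' : y' = Fin.snoc y y₀)
    (w : Fin d → ℝ) (hw : ∑ k, |w k| ≤ lam)
    (g : Fin n → ℝ) (hg : g = fun j => (1 / (n : ℝ)) * ((∑ k, X j k * w k) - y j))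
    (g' : Fin (n + 1) → ℝ)
    (hg' : g' = fun j => (1 / (n : ℝ)) * ((∑ k, X' j k * w k) - y' j))
    (G G' : ℝ)
    (hG : G = sSup ((fun z : Fin d → ℝ =>
      ∑ j, ((∑ k, X j k * w k) - ∑ k, X j k * z k) * g j) ''
        {z : Fin d → ℝ | ∑ k, |z k| ≤ lam}))
    (hG' : G' = sSup ((fun z : Fin d → ℝ =>
      ∑ j, ((∑ k, X' j k * w k) - ∑ k, X' j k * z k) * g' j) ''
        {z : Fin d → ℝ | ∑ k, |z k| ≤ lam})) :
    |G' - G| ≤ 4 * lam ^ 2 / n := by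
  have hg'_snoc : g' = Fin.snoc g ((1 / (n : ℝ)) * ((∑ k, x₀ k * w k) - y₀)) := by
    subst hg' hX' hy' hg
    funext j
    induction j using Fin.lastCases <;> simp
  have hdiff : ∀ z ∈ {z : Fin d → ℝ | ∑ k, |z k| ≤ lam},
      |wolfeGapFun X' w g' z - wolfeGapFun X w g z| ≤ 4 * lam ^ 2 / n := by
    intro z hz
    rw [hX', hg'_snoc, wolfeGapFun_snoc, add_sub_cancel_left, div_eq_mul_one_div (4 * lam ^ 2)]
    exact abs_sub_mul_sub_le ((abs_sum_mul_le_sum_abs_of_abs_le_one hx₀ w).trans hw)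
      ((abs_sum_mul_le_sum_abs_of_abs_le_one hx₀ z).trans hz) hy₀ (by positivity)
  have hball := isCompact_setOf_sum_abs_le (ι := Fin d) lam
  rw [hG, hG']
  exact abs_csSup_image_sub_csSup_image_le ⟨w, hw⟩
    (hball.bddAbove_image (continuous_wolfeGapFun X w g).continuousOn)
    (hball.bddAbove_image (continuous_wolfeGapFun X' w g').continuousOn) hdiff

/-- Appending one bounded datapoint changes the Wolfe gap of ℓ₁-constrained
least-squares regression by at most `4λ²/n`. -/
theorem sensitivity_wolfe_gap (n d : ℕ) (hn : 0 < n) (lam : ℝ) (hlam : 0 < lam)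
    (X : Fin n → Fin d → ℝ) (y : Fin n → ℝ)
    (hX : ∀ j k, |X j k| ≤ 1) (hy : ∀ j, |y j| ≤ lam)
    (x₀ : Fin d → ℝ) (hx₀ : ∀ k, |x₀ k| ≤ 1) (y₀ : ℝ) (hy₀ : |y₀| ≤ lam)
    (X' : Fin (n + 1) → Fin d → ℝ) (hX' : X' = Fin.snoc X x₀)
    (y' : Fin (n + 1) → ℝ) (hy' : y' = Fin.snoc y y₀)
    (w : Fin d → ℝ) (hw : ∑ k, |w k| ≤ lam)
    (g : Fin n → ℝ) (hg : g = fun j => (1 / (n : ℝ)) * ((∑ k, X j k * w k) - y j))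
    (g' : Fin (n + 1) → ℝ)
    (hg' : g' = fun j => (1 / (n : ℝ)) * ((∑ k, X' j k * w k) - y' j))
    (G G' : ℝ)
    (hG : G = sSup ((fun z : Fin d → ℝ =>
      ∑ j, ((∑ k, X j k * w k) - ∑ k, X j k * z k) * g j) ''
        {z : Fin d → ℝ | ∑ k, |z k| ≤ lam}))
    (hG' : G' = sSup ((fun z : Fin d → ℝ =>
      ∑ j, ((∑ k, X' j k * w k) - ∑ k, X' j k * z k) * g' j) ''
        {z : Fin d → ℝ | ∑ k, |z k| ≤ lam})) :
    |G' - G| ≤ 4 * lam ^ 2 / n :=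
  sensitivity_wolfe_gap_general n d lam X y x₀ hx₀ y₀ hy₀ X' hX' y' hy' w hw g hg g' hg' G G' hG hG'
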